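/- arXiv:0910.0814 — 2 statements merged into one kernel-verified Lean document; each statement's English description precedes it below -/
import Mathlib

section
/- Every necklace is an ordered simplicial set. -/
open CategoryTheory Simplicial

namespace Paper

/-- The directed-edge relation on vertices of a simplicial set. -/
def edgeRel (X : SSet) (x y : X _⦋0⦌) : Prop :=
  ∃ e : X _⦋1⦌, X.δ 1 e = x ∧ X.δ 0 e = y

/-- `x ⪯ y` iff there is a finite directed path of 1-simplices from `x` to `y`. -/
def vertPath (X : SSet) : X _⦋0⦌ → X _⦋0⦌ → Prop :=
  Relation.ReflTransGen (edgeRel X)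

/-- The sequence of vertices of an `n`-simplex. -/
def vertexSeq {X : SSet} {n : ℕ} (x : X _⦋n⦌) : Fin (n + 1) → X _⦋0⦌ :=
  fun i => X.map (SimplexCategory.const (⦋0⦌ : SimplexCategory) ⦋n⦌ i).op x

/-- A simplicial set is *ordered* if the path preorder on its vertices is
antisymmetric and every simplex is determined by its sequence of vertices. -/
def Ordered (X : SSet) : Prop :=
  (∀ x y : X _⦋0⦌, vertPath X x y → vertPath X y x → x = y) ∧
  (∀ (n : ℕ) (x y : X _⦋n⦌), vertexSeq x = vertexSeq y → x = y)

/-- A hands-on model of the standard `n`-simplex. -/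
def Δstd (n : ℕ) : SSet where
  obj m := Fin (m.unop.len + 1) →o Fin (n + 1)
  map φ := TypeCat.ofHom fun f => f.comp φ.unop.toOrderHom
  map_id _ := rfl
  map_comp _ _ := rfl

/-- The condition cutting a necklace with joint set `J` out of `Δstd N`:
no joint lies strictly between the first and last vertex of the simplex. -/
def NeckCond {N : ℕ} (J : Finset (Fin (N + 1))) {m : SimplexCategoryᵒᵖ}
    (f : Fin (m.unop.len + 1) →o Fin (N + 1)) : Prop :=
  ∀ t ∈ J, ¬ (f 0 < t ∧ t < f (Fin.last m.unop.len))

/-- The necklace with vertices `0,…,N` and joints `J` (a wedge of simplices glued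
end to end; the beads span the intervals between consecutive joints). -/
def Necklace (N : ℕ) (J : Finset (Fin (N + 1))) : SSet where
  obj m := { f : Fin (m.unop.len + 1) →o Fin (N + 1) // NeckCond J f }
  map φ := TypeCat.ofHom fun f => ⟨f.1.comp φ.unop.toOrderHom, by
    intro t ht h
    exact f.2 t ht ⟨lt_of_le_of_lt (f.1.monotone (Fin.zero_le _)) h.1,
      lt_of_lt_of_le h.2 (f.1.monotone (Fin.le_last _))⟩⟩
  map_id _ := rfl
  map_comp _ _ := rfl

/-- The vertex `v` of a necklace. -/
def vtx {N : ℕ} (J : Finset (Fin (N + 1))) (v : Fin (N + 1)) : (Necklace N J) _⦋0⦌ :=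
  ⟨⟨fun _ => v, fun _ _ _ => le_rfl⟩, fun _ _ h => absurd (h.1.trans h.2) (lt_irrefl v)⟩

/-- The canonical inclusion of a necklace into the simplex on its vertices. -/
def neckIncl (N : ℕ) (J : Finset (Fin (N + 1))) : Necklace N J ⟶ Δstd N where
  app _ := TypeCat.ofHom fun f => f.1
  naturality _ _ _ := rfl

lemma eq_vtx {N : ℕ} {J : Finset (Fin (N + 1))} (x : (Necklace N J) _⦋0⦌) :
    x = vtx J (x.1 0) := by
  refine Subtype.ext (OrderHom.ext _ _ (funext fun i => ?_))
  have : i = 0 := Subsingleton.elim (α := Fin 1) i 0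
  rw [this]; rfl

/-- The map induced on vertices by a map of necklaces. -/
def nvmap {N N' : ℕ} {J : Finset (Fin (N + 1))} {J' : Finset (Fin (N' + 1))}
    (g : Necklace N J ⟶ Necklace N' J') : Fin (N + 1) → Fin (N' + 1) :=
  fun v => (g.app (Opposite.op (⦋0⦌ : SimplexCategory)) (vtx J v)).1 0

lemma app_vtx {N N' : ℕ} {J : Finset (Fin (N + 1))} {J' : Finset (Fin (N' + 1))}
    (g : Necklace N J ⟶ Necklace N' J') (v : Fin (N + 1)) :
    g.app (Opposite.op (⦋0⦌ : SimplexCategory)) (vtx J v) = vtx J' (nvmap g v) :=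
  eq_vtx _

lemma nvmap_comp {N N' N'' : ℕ} {J : Finset (Fin (N + 1))} {J' : Finset (Fin (N' + 1))}
    {J'' : Finset (Fin (N'' + 1))} (g : Necklace N J ⟶ Necklace N' J')
    (h : Necklace N' J' ⟶ Necklace N'' J'') :
    nvmap (g ≫ h) = nvmap h ∘ nvmap g := by
  funext v
  show (h.app _ (g.app _ (vtx J v))).1 0 = _
  rw [app_vtx g v]
  rfl

/-- A map of simplicial sets is a *simple inclusion* if it has the right lifting
property with respect to the endpoint inclusions `∂Δ¹ ↪ T` for every necklace `T`. -/
def IsSimpleInclusion {A X : SSet} (i : A ⟶ X) : Prop :=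
  ∀ (N : ℕ) (J : Finset (Fin (N + 1))), (0 : Fin (N + 1)) ∈ J → Fin.last N ∈ J →
    ∀ (v : Necklace N J ⟶ X) (a b : A _⦋0⦌),
      i.app _ a = v.app _ (vtx J 0) → i.app _ b = v.app _ (vtx J (Fin.last N)) →
      ∃ l : Necklace N J ⟶ A, l ≫ i = v ∧
        l.app _ (vtx J 0) = a ∧ l.app _ (vtx J (Fin.last N)) = b

def Pstd (m : ℕ) (n : Fin m → ℕ) : SSet where
  obj k := ∀ i : Fin m, Fin (k.unop.len + 1) →o Fin (n i + 1)
  map φ := TypeCat.ofHom fun f => fun i => (f i).comp φ.unop.toOrderHom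
  map_id _ := rfl
  map_comp _ _ := rfl

/-- A simplex of a simplicial set is nondegenerate if it is not the image of a
lower-dimensional simplex under a degeneracy operator. -/
def IsNondeg {X : SSet} {n : ℕ} (x : X _⦋n⦌) : Prop :=
  ∀ (m : ℕ) (σ : (⦋n⦌ : SimplexCategory) ⟶ ⦋m⦌) (y : X _⦋m⦌),
    Function.Surjective σ.toOrderHom → x = X.map σ.op y → n ≤ m

/-- A simplex is degenerate if it is the image of a  strictly lower-dimensional
simplex under a (surjective) degeneracy operator. -/
def IsDegenerate {X : SSet} {n : ℕ} (x : X _⦋n⦌) : Prop :=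
  ∃ (m : ℕ) (σ : (⦋n⦌ : SimplexCategory) ⟶ ⦋m⦌) (y : X _⦋m⦌),
    m < n ∧ Function.Surjective σ.toOrderHom ∧ x = X.map σ.op y


/-- The bead of a necklace spanning two consecutive joints `j ≤ j'`. -/
def bead {N : ℕ} (J : Finset (Fin (N + 1))) (j j' : Fin (N + 1)) (hle : j ≤ j')
    (hcons : ∀ t ∈ J, ¬ (j < t ∧ t < j')) :
    (Necklace N J) _⦋j'.val - j.val⦌ :=
  ⟨⟨fun k => ⟨j.val + k.val, by
        have hk := k.isLt
        simp only [Opposite.unop_op, SimplexCategory.len_mk] at hk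
        have := j'.isLt; omega⟩,
      fun k k' h => by
        simp only [Fin.mk_le_mk]
        exact Nat.add_le_add_left h j.val⟩,
    by
      intro t ht h
      refine hcons t ht ⟨?_, ?_⟩
      · have h1 := h.1
        simp only [Fin.lt_def, OrderHom.coe_mk, Fin.val_zero] at h1 ⊢
        change j.val + 0 < t.val at h1
        omega
      · have h2 := h.2
        have hle' : j.val ≤ j'.val := hle
        simp only [Fin.lt_def, OrderHom.coe_mk, Fin.val_last, Opposite.unop_op,
          SimplexCategory.len_mk] at h2 ⊢
        change t.val < j.val + (j'.val - j.val) at h2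
        omega⟩

/-- A map from a necklace is totally nondegenerate if it sends each bead to a
nondegenerate simplex. -/
def TotallyNondeg {N : ℕ} {J : Finset (Fin (N + 1))} {S : SSet}
    (f : Necklace N J ⟶ S) : Prop :=
  ∀ (j j' : Fin (N + 1)), j ∈ J → j' ∈ J → ∀ (hlt : j < j')
    (hcons : ∀ t ∈ J, ¬ (j < t ∧ t < j')),
    IsNondeg (f.app _ (bead J j j' hlt.le hcons))

/-- A levelwise surjection of simplicial sets. -/
def LevelSurj {X Y : SSet} (f : X ⟶ Y) : Prop :=
  ∀ m, Function.Surjective (f.app m)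

/-- The category of necklaces over `S` with endpoints `a` and `b`. -/
structure NecOver (S : SSet) (a b : S _⦋0⦌) where
  N : ℕ
  J : Finset (Fin (N + 1))
  h0 : (0 : Fin (N + 1)) ∈ J
  hN : Fin.last N ∈ J
  f : Necklace N J ⟶ S
  ha : f.app _ (vtx J 0) = a
  hb : f.app _ (vtx J (Fin.last N)) = b

instance (S : SSet) (a b : S _⦋0⦌) : Category (NecOver S a b) where
  Hom t u := { g : Necklace t.N t.J ⟶ Necklace u.N u.J //
    g ≫ u.f = t.f ∧ g.app _ (vtx t.J 0) = vtx u.J 0 ∧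
    g.app _ (vtx t.J (Fin.last t.N)) = vtx u.J (Fin.last u.N) }
  id t := ⟨𝟙 _, Category.id_comp _, rfl, rfl⟩
  comp {t u v} g h := ⟨g.1 ≫ h.1, by rw [Category.assoc, h.2.1, g.2.1],
    by show h.1.app _ (g.1.app _ _) = _; rw [g.2.2.1, h.2.2.1],
    by show h.1.app _ (g.1.app _ _) = _; rw [g.2.2.2, h.2.2.2]⟩
  id_comp g := Subtype.ext (Category.id_comp _)
  comp_id g := Subtype.ext (Category.comp_id _)
  assoc f g h := Subtype.ext (Category.assoc _ _ _)


/-- Flagged necklaces over `S` with endpoints `a, b` and flags of length `n`. -/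
structure FlaggedNec (S : SSet) (a b : S _⦋0⦌) (n : ℕ) where
  N : ℕ
  J : Finset (Fin (N + 1))
  h0 : (0 : Fin (N + 1)) ∈ J
  hN : Fin.last N ∈ J
  f : Necklace N J ⟶ S
  ha : f.app _ (vtx J 0) = a
  hb : f.app _ (vtx J (Fin.last N)) = b
  flag : Fin (n + 1) → Finset (Fin (N + 1))
  flag_mono : Monotone flag
  flag_joints : J ⊆ flag 0

instance (S : SSet) (a b : S _⦋0⦌) (n : ℕ) : Category (FlaggedNec S a b n) where
  Hom t u := { g : Necklace t.N t.J ⟶ Necklace u.N u.J //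
    g ≫ u.f = t.f ∧ g.app _ (vtx t.J 0) = vtx u.J 0 ∧
    g.app _ (vtx t.J (Fin.last t.N)) = vtx u.J (Fin.last u.N) ∧
    ∀ i, (t.flag i).image (nvmap g) = u.flag i }
  id t := ⟨𝟙 _, Category.id_comp _, rfl, rfl, fun i => by
    have : nvmap (𝟙 (Necklace t.N t.J)) = id := rfl
    rw [this, Finset.image_id]⟩
  comp {t u v} g h := ⟨g.1 ≫ h.1, by rw [Category.assoc, h.2.1, g.2.1],
    by show h.1.app _ (g.1.app _ _) = _; rw [g.2.2.1, h.2.2.1],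
    by show h.1.app _ (g.1.app _ _) = _; rw [g.2.2.2.1, h.2.2.2.1],
    fun i => by
      rw [nvmap_comp, ← Finset.image_image, g.2.2.2.2 i, h.2.2.2.2 i]⟩
  id_comp g := Subtype.ext (Category.id_comp _)
  comp_id g := Subtype.ext (Category.comp_id _)
  assoc f g h := Subtype.ext (Category.assoc _ _ _)


/-! A necklace is a simplicial subset of the simplex `Δstd N` on its vertices, and being ordered
passes to simplicial subsets. In `Δstd N` every edge goes up in the order of `Fin (N + 1)`, and a
simplex is by definition its (monotone) vertex sequence. -/

lemma vertPath.map {X Y : SSet} (f : X ⟶ Y) {x y : X _⦋0⦌} (h : vertPath X x y) :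
    vertPath Y (f.app _ x) (f.app _ y) := by
  induction h with
  | refl => exact .refl
  | tail _ hyz ih =>
    obtain ⟨e, rfl, rfl⟩ := hyz
    exact ih.tail ⟨f.app _ e, (SSet.δ_naturality_apply f 1 e).symm,
      (SSet.δ_naturality_apply f 0 e).symm⟩

lemma vertexSeq_map {X Y : SSet} (f : X ⟶ Y) {n : ℕ} (x : X _⦋n⦌) :
    vertexSeq (f.app _ x) = f.app _ ∘ vertexSeq x :=
  funext fun _ => (NatTrans.naturality_apply f _ x).symm

lemma Ordered.of_mono {X Y : SSet} (f : X ⟶ Y) [Mono f] (hY : Ordered Y) : Ordered X := by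
  have hf : ∀ m, Function.Injective (f.app m) := fun m => (mono_iff_injective _).1 inferInstance
  refine ⟨fun x y hxy hyx => hf _ (hY.1 _ _ (hxy.map f) (hyx.map f)), fun n x y h => ?_⟩
  exact hf _ (hY.2 n _ _ (by rw [vertexSeq_map, vertexSeq_map, h]))

lemma vertPath_Δstd_le {N : ℕ} {x y : (Δstd N) _⦋0⦌} (h : vertPath (Δstd N) x y) :
    x.toFun 0 ≤ y.toFun 0 := by
  induction h with
  | refl => exact le_rfl
  | tail _ hyz ih =>
    obtain ⟨e, rfl, rfl⟩ := hyz
    exact ih.trans (e.monotone (by decide))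

lemma ordered_Δstd (N : ℕ) : Ordered (Δstd N) := by
  refine ⟨fun x y hxy hyx => ?_, fun n x y h => ?_⟩
  · refine OrderHom.ext _ _ (funext fun i => ?_)
    rw [Subsingleton.elim (α := Fin 1) i 0]
    exact (vertPath_Δstd_le hxy).antisymm (vertPath_Δstd_le hyx)
  · exact OrderHom.ext _ _ (funext fun i =>
      congrArg (fun v : Fin 1 →o Fin (N + 1) => v 0) (congrFun h i))

instance (N : ℕ) (J : Finset (Fin (N + 1))) : Mono (neckIncl N J) :=
  (NatTrans.mono_iff_mono_app _).2 fun _ => (mono_iff_injective _).2 Subtype.val_injective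

theorem stmt11_general (N : ℕ) (J : Finset (Fin (N + 1))) :
    Ordered (Necklace N J) :=
  .of_mono (neckIncl N J) (ordered_Δstd N)

theorem stmt11 (N : ℕ) (J : Finset (Fin (N + 1)))
    (h0 : (0 : Fin (N + 1)) ∈ J) (hN : Fin.last N ∈ J) :
    Ordered (Necklace N J) :=
  stmt11_general N J

end Paper
end

section
/- If T is a necklace, X is an ordered simplicial set, and f : T → X is a map of simplicial sets, then the image of f is a necklace. -/
/-!
Consecutive vertices of a necklace span edges, so the vertex map `φ` of `f` is monotone for the
path order of `X`, which is a partial order because `X` is ordered. Hence `φ` factors through a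
monotone surjection `g : [N] → [N']` with the same fibres. Postcomposition with `g` maps the
necklace onto the necklace with joints `g(J)`, and since a simplex of `X` is determined by its
vertices, `f` identifies exactly the simplices that `g` identifies; so the image of `f` is this
necklace.
-/

open CategoryTheory Simplicial

namespace Paper

section FiniteOrder

variable {α β : Type*}

theorem exists_surjective_fin_ker_eq_of_linearOrder [Preorder α] [Fintype α] [Nonempty α]
    [LinearOrder β] (G : α →o β) :
    ∃ (n : ℕ) (g : α →o Fin (n + 1)), Function.Surjective g ∧ ∀ u v, g u = g v ↔ G u = G v := by
  classical
  obtain ⟨n, hn⟩ := Nat.exists_eq_succ_of_ne_zero (Finset.univ_nonempty.image G).card_ne_zero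
  let e := (Finset.univ.image G).orderIsoOfFin hn
  refine ⟨n, ⟨fun u => e.symm ⟨G u, Finset.mem_image_of_mem G (Finset.mem_univ u)⟩,
    fun u v huv => e.symm.monotone (G.monotone huv)⟩, fun c => ?_, fun u v => ?_⟩
  · obtain ⟨u, -, hu⟩ := Finset.mem_image.1 (e c).2
    exact ⟨u, e.symm_apply_eq.2 (Subtype.ext hu)⟩
  · exact e.symm.injective.eq_iff.trans Subtype.mk_eq_mk

theorem exists_surjective_fin_ker_eq_of_monotone [LinearOrder α] [Fintype α] [Nonempty α]
    [PartialOrder β] {φ : α → β} (hφ : Monotone φ) :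
    ∃ (n : ℕ) (g : α →o Fin (n + 1)), Function.Surjective g ∧ ∀ u v, g u = g v ↔ φ u = φ v := by
  classical
  -- `#(below u)` measures the height of `φ u` in the chain `φ '' α`
  let below : α → Finset α := fun u => Finset.univ.filter fun w => φ w ≤ φ u
  have below_mono : Monotone below := fun u v huv w => by
    simpa [below] using fun h => h.trans (hφ huv)
  obtain ⟨n, g, hg, hker⟩ := exists_surjective_fin_ker_eq_of_linearOrder
    ⟨fun u => (below u).card, fun u v huv => Finset.card_le_card (below_mono huv)⟩
  refine ⟨n, g, hg, fun u v => (hker u v).trans ⟨fun h => ?_, fun h =>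
    show (below u).card = (below v).card by simp only [below, h]⟩⟩
  wlog huv : u ≤ v generalizing u v
  · exact (this v u h.symm (le_of_not_ge huv)).symm
  have heq : below u = below v := Finset.eq_of_subset_of_card_le (below_mono huv) h.ge
  have hvu : φ v ≤ φ u := by
    have hv : v ∈ below u := heq ▸ by simp [below]
    simpa [below] using hv
  exact le_antisymm (hφ huv) hvu

end FiniteOrder

section Preimage

variable {α β : Type*} [LinearOrder α] [Fintype α] [LinearOrder β]
  (g : α →o β) (hg : Function.Surjective g)

noncomputable def leastPreimage (c : β) : α :=
  (Finset.univ.filter fun u => c ≤ g u).min'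
    (let ⟨u, hu⟩ := hg c; ⟨u, by simp [hu]⟩)

noncomputable def greatestPreimage (c : β) : α :=
  (Finset.univ.filter fun u => g u ≤ c).max'
    (let ⟨u, hu⟩ := hg c; ⟨u, by simp [hu]⟩)

theorem leastPreimage_le_iff {c : β} {u : α} : leastPreimage g hg c ≤ u ↔ c ≤ g u := by
  refine ⟨fun h => ?_, fun h => Finset.min'_le _ _ (by simp [h])⟩
  have hmem := Finset.min'_mem (Finset.univ.filter fun u => c ≤ g u)
    (let ⟨u, hu⟩ := hg c; ⟨u, by simp [hu]⟩)
  exact (Finset.mem_filter.1 hmem).2.trans (g.monotone h)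

theorem le_greatestPreimage_iff {c : β} {u : α} : u ≤ greatestPreimage g hg c ↔ g u ≤ c := by
  refine ⟨fun h => ?_, fun h => Finset.le_max' _ _ (by simp [h])⟩
  have hmem := Finset.max'_mem (Finset.univ.filter fun u => g u ≤ c)
    (let ⟨u, hu⟩ := hg c; ⟨u, by simp [hu]⟩)
  exact (g.monotone h).trans (Finset.mem_filter.1 hmem).2

theorem apply_leastPreimage (c : β) : g (leastPreimage g hg c) = c := by
  obtain ⟨u, rfl⟩ := hg c
  exact le_antisymm (g.monotone ((leastPreimage_le_iff g hg).2 le_rfl))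
    ((leastPreimage_le_iff g hg).1 le_rfl)

theorem apply_greatestPreimage (c : β) : g (greatestPreimage g hg c) = c := by
  obtain ⟨u, rfl⟩ := hg c
  exact le_antisymm ((le_greatestPreimage_iff g hg).1 le_rfl)
    (g.monotone ((le_greatestPreimage_iff g hg).2 le_rfl))

theorem monotone_leastPreimage : Monotone (leastPreimage g hg) := fun _ _ h =>
  (leastPreimage_le_iff g hg).2 (h.trans ((leastPreimage_le_iff g hg).1 le_rfl))

end Preimage

section Pushforward

variable {N N' : ℕ} {J : Finset (Fin (N + 1))}

theorem NeckCond.comp {m : SimplexCategoryᵒᵖ} {t : Fin (m.unop.len + 1) →o Fin (N + 1)}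
    (ht : NeckCond J t) (g : Fin (N + 1) →o Fin (N' + 1)) : NeckCond (J.image g) (g.comp t) := by
  intro s hs ⟨h0, hlast⟩
  obtain ⟨j, hj, rfl⟩ := Finset.mem_image.1 hs
  exact ht j hj ⟨g.monotone.reflect_lt h0, g.monotone.reflect_lt hlast⟩

def Necklace.pushforward (J : Finset (Fin (N + 1))) (g : Fin (N + 1) →o Fin (N' + 1)) :
    Necklace N J ⟶ Necklace N' (J.image g) where
  app _ := TypeCat.ofHom fun t => ⟨g.comp t.1, t.2.comp g⟩
  naturality _ _ _ := rfl

theorem Necklace.pushforward_app_surjective {g : Fin (N + 1) →o Fin (N' + 1)}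
    (hg : Function.Surjective g) (m : SimplexCategoryᵒᵖ) :
    Function.Surjective ((Necklace.pushforward J g).app m) := by
  rintro ⟨h, hh⟩
  -- the first vertex goes to the top of its fibre, the others to the bottom of theirs,
  -- so that no joint can fall strictly inside the lifted simplex
  let t : Fin (m.unop.len + 1) →o Fin (N + 1) :=
    ⟨fun i => max (leastPreimage g hg (h i)) (greatestPreimage g hg (h 0)),
      fun i j hij => max_le_max_right _ (monotone_leastPreimage g hg (h.monotone hij))⟩
  have hgt : g.comp t = h := by
    refine OrderHom.ext _ _ (funext fun i => ?_)
    change g (max _ _) = h i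
    rw [g.monotone.map_max, apply_leastPreimage, apply_greatestPreimage,
      max_eq_left (h.monotone (Fin.zero_le i))]
  refine ⟨⟨t, fun j hj ⟨h0, hlast⟩ => ?_⟩, Subtype.ext hgt⟩
  have hj0 : greatestPreimage g hg (h 0) < j := (le_max_right _ _).trans_lt h0
  have hjl : j < leastPreimage g hg (h (Fin.last _)) :=
    (lt_max_iff.1 hlast).resolve_right (not_lt.2 hj0.le)
  rw [← not_le, le_greatestPreimage_iff] at hj0
  rw [← not_le, leastPreimage_le_iff] at hjl
  exact hh (g j) (Finset.mem_image_of_mem g hj) ⟨not_le.1 hj0, not_le.1 hjl⟩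

end Pushforward

section Range

universe u v w

variable {C : Type u} [Category.{v} C] {A B X : C ⥤ Type w}

noncomputable def rangeIsoOfSurjectiveOfKer (p : A ⟶ B) (f : A ⟶ X)
    (hp : ∀ k, Function.Surjective (p.app k))
    (hker : ∀ k (a a' : A.obj k), f.app k a = f.app k a' ↔ p.app k a = p.app k a') :
    (Subfunctor.range f).toFunctor ≅ B := by
  let descend : B ⟶ (Subfunctor.range f).toFunctor :=
    { app k := TypeCat.ofHom fun b => ⟨f.app k (hp k b).choose, _, rfl⟩
      naturality k l φ := by
        ext b
        refine Subtype.ext ?_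
        change f.app l (hp l (B.map φ b)).choose = X.map φ (f.app k (hp k b).choose)
        rw [← NatTrans.naturality_apply, hker, (hp l _).choose_spec, NatTrans.naturality_apply,
          (hp k b).choose_spec] }
  have : IsIso descend := by
    refine (NatTrans.isIso_iff_isIso_app _).2 fun k => (isIso_iff_bijective _).2 ⟨?_, ?_⟩
    · intro b b' h
      rw [← (hp k b).choose_spec, ← (hp k b').choose_spec]
      exact (hker k _ _).1 (congrArg Subtype.val h)
    · rintro ⟨_, a, rfl⟩
      exact ⟨p.app k a, Subtype.ext ((hker k _ _).2 (hp k _).choose_spec)⟩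
  exact (asIso descend).symm

end Range

section VertexMap

variable {X : SSet} {N : ℕ} {J : Finset (Fin (N + 1))}

def vertexMap (f : Necklace N J ⟶ X) (v : Fin (N + 1)) : X _⦋0⦌ :=
  f.app _ (vtx J v)

theorem map_app_eq_vertexMap (f : Necklace N J ⟶ X) {k : SimplexCategoryᵒᵖ} (σ : ⦋0⦌ ⟶ k.unop)
    (x : (Necklace N J).obj k) :
    X.map σ.op (f.app k x) = vertexMap f (x.1 (σ.toOrderHom 0)) := by
  rw [← NatTrans.naturality_apply]
  exact congrArg (f.app _) (eq_vtx _)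

theorem vertexSeq_app (f : Necklace N J ⟶ X) {k : SimplexCategoryᵒᵖ} (x : (Necklace N J).obj k) :
    vertexSeq (n := k.unop.len) (f.app k x) = vertexMap f ∘ x.1 :=
  funext fun _ => map_app_eq_vertexMap f _ x

def Necklace.edge (J : Finset (Fin (N + 1))) (i : Fin N) : (Necklace N J) _⦋1⦌ :=
  ⟨(SimplexCategory.mkOfSucc i).toOrderHom, fun t _ ⟨h0, h1⟩ => by
    change i.castSucc < t at h0
    change t < i.succ at h1
    rw [Fin.lt_def] at h0 h1
    simp only [Fin.val_castSucc, Fin.val_succ] at h0 h1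
    omega⟩

theorem edgeRel_vertexMap (f : Necklace N J ⟶ X) (i : Fin N) :
    edgeRel X (vertexMap f i.castSucc) (vertexMap f i.succ) :=
  ⟨f.app _ (Necklace.edge J i), map_app_eq_vertexMap f _ _, map_app_eq_vertexMap f _ _⟩

abbrev vertPathPreorder (X : SSet) : Preorder (X _⦋0⦌) where
  le := vertPath X
  le_refl _ := .refl
  le_trans _ _ _ := .trans

theorem vertPath_vertexMap (f : Necklace N J ⟶ X) {u v : Fin (N + 1)} (huv : u ≤ v) :
    vertPath X (vertexMap f u) (vertexMap f v) := by
  let := vertPathPreorder X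
  exact ((Fin.monotone_iff_le_succ (f := vertexMap f)).2 fun i =>
    Relation.ReflTransGen.single (edgeRel_vertexMap f i)) huv

theorem exists_surjective_fin_ker_eq_vertexMap (hX : Ordered X) (f : Necklace N J ⟶ X) :
    ∃ (N' : ℕ) (g : Fin (N + 1) →o Fin (N' + 1)), Function.Surjective g ∧
      ∀ u v, g u = g v ↔ vertexMap f u = vertexMap f v := by
  let : PartialOrder (X _⦋0⦌) := { vertPathPreorder X with le_antisymm := hX.1 }
  exact exists_surjective_fin_ker_eq_of_monotone fun _ _ => vertPath_vertexMap f

theorem app_eq_app_iff_vertexMap (hX : Ordered X) (f : Necklace N J ⟶ X) {k : SimplexCategoryᵒᵖ}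
    (a a' : (Necklace N J).obj k) :
    f.app k a = f.app k a' ↔ ∀ i, vertexMap f (a.1 i) = vertexMap f (a'.1 i) := by
  refine ⟨fun h i => ?_, fun h => hX.2 k.unop.len _ _ ?_⟩
  · simpa only [vertexSeq_app, Function.comp_def] using
      congrFun (congrArg (vertexSeq (n := k.unop.len)) h) i
  · simpa only [vertexSeq_app, Function.comp_def] using funext h

theorem Necklace.pushforward_app_eq_iff {N' : ℕ} (g : Fin (N + 1) →o Fin (N' + 1))
    {k : SimplexCategoryᵒᵖ} (a a' : (Necklace N J).obj k) :
    (Necklace.pushforward J g).app k a = (Necklace.pushforward J g).app k a' ↔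
      ∀ i, g (a.1 i) = g (a'.1 i) := by
  rw [← funext_iff]
  exact Subtype.ext_iff.trans DFunLike.coe_fn_eq.symm

end VertexMap

theorem stmt12 (X : SSet) (hX : Ordered X) (N : ℕ) (J : Finset (Fin (N + 1)))
    (h0 : (0 : Fin (N + 1)) ∈ J) (hN : Fin.last N ∈ J) (f : Necklace N J ⟶ X) :
    ∃ (N' : ℕ) (J' : Finset (Fin (N' + 1))),
      (0 : Fin (N' + 1)) ∈ J' ∧ Fin.last N' ∈ J' ∧
      Nonempty ((Subfunctor.range f).toFunctor ≅ Necklace N' J') := by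
  obtain ⟨N', g, hg, hker⟩ := exists_surjective_fin_ker_eq_vertexMap hX f
  have hg0 : g 0 = 0 := by
    obtain ⟨u, hu⟩ := hg 0
    exact Fin.le_zero_iff.1 (hu ▸ g.monotone (Fin.zero_le u))
  have hgN : g (Fin.last N) = Fin.last N' := by
    obtain ⟨u, hu⟩ := hg (Fin.last N')
    exact Fin.last_le_iff.1 (hu ▸ g.monotone (Fin.le_last u))
  refine ⟨N', J.image g, hg0 ▸ Finset.mem_image_of_mem g h0, hgN ▸ Finset.mem_image_of_mem g hN,
    ⟨rangeIsoOfSurjectiveOfKer (Necklace.pushforward J g) f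
      (Necklace.pushforward_app_surjective hg) fun k a a' => ?_⟩⟩
  simp only [app_eq_app_iff_vertexMap hX, Necklace.pushforward_app_eq_iff, hker]

end Paper
end
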